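/- arXiv:2507.21449 — 5 statements merged into one kernel-verified Lean document; each statement's English description precedes it below -/
import Mathlib

section
/- Fix an integer M ≥ 1, layer sizes H_0, …, H_M ≥ 1, and for l = 1, …, M let W_l be the H_l × H_{l−1} matrix of distinct indeterminates w_{i,j,l}, with product W = W_M ⋯ W_1 whose entries are the polynomials P_{ij}. For every nonzero vector x ∈ ℝ^N (N = H_0) and every index 1 ≤ i ≤ H_M, the polynomial Σ_{j=1}^N P_{ij} x_j (a polynomial in the variables w_{i,j,l}) is not the zero polynomial. -/
/-!
Pick `j₀` with `x_{j₀} ≠ 0` and specialise the weights: `w_{k,j,1} := δ_{j,j₀}` and every other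
weight `:= 1`. Then `W_1 x` is the constant vector `x_{j₀}`, each later `W_l` is the all-ones
matrix and multiplies a constant vector by `H_{l-1}`, so `W x` is the constant vector
`x_{j₀} H_1 ⋯ H_{M-1}`, which is nonzero because the hidden layers are nonempty.
-/

open MvPolynomial

/-- Index type for the distinct indeterminates `w_{i,j,l}`: the `(i,j)` entry of the
`l`-th weight matrix of a deep linear network with layer sizes `H 0, H 1, …`. -/
abbrev DlnVarIdx (H : ℕ → ℕ) := (l : ℕ) × (Fin (H (l + 1)) × Fin (H l))

/-- The `l`-th weight matrix whose entries are the indeterminates `w_{i,j,l}`. -/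
noncomputable def dlnWmat (H : ℕ → ℕ) (l : ℕ) :
    Matrix (Fin (H (l + 1))) (Fin (H l)) (MvPolynomial (DlnVarIdx H) ℝ) :=
  Matrix.of fun i j => MvPolynomial.X ⟨l, (i, j)⟩

/-- The matrix product `W = W_M W_{M-1} ⋯ W_1` of the indeterminate matrices. -/
noncomputable def dlnPprod (H : ℕ → ℕ) :
    (M : ℕ) → Matrix (Fin (H M)) (Fin (H 0)) (MvPolynomial (DlnVarIdx H) ℝ)
  | 0 => 1
  | M + 1 => dlnWmat H M * dlnPprod H M

open Matrix

def dlnTestPoint (H : ℕ → ℕ) (j₀ : Fin (H 0)) : DlnVarIdx H → ℝ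
  | ⟨0, (_, j)⟩ => if j = j₀ then 1 else 0
  | ⟨_ + 1, _⟩ => 1

variable {H : ℕ → ℕ}

theorem dlnWmat_zero_map_eval_dlnTestPoint_mulVec (j₀ : Fin (H 0)) (x : Fin (H 0) → ℝ) :
    (dlnWmat H 0).map (eval (dlnTestPoint H j₀)) *ᵥ x = fun _ => x j₀ := by
  ext k
  simp [dlnWmat, dlnTestPoint, mulVec, dotProduct]

theorem dlnWmat_succ_map_eval_dlnTestPoint (j₀ : Fin (H 0)) (l : ℕ) :
    (dlnWmat H (l + 1)).map (eval (dlnTestPoint H j₀)) = of fun _ _ => 1 := by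
  ext a b
  simp [dlnWmat, dlnTestPoint]

theorem dlnPprod_map_eval_dlnTestPoint_mulVec (j₀ : Fin (H 0)) (x : Fin (H 0) → ℝ)
    {m : ℕ} (hm : 1 ≤ m) :
    (dlnPprod H m).map (eval (dlnTestPoint H j₀)) *ᵥ x =
      fun _ => x j₀ * ∏ l ∈ Finset.Ico 1 m, (H l : ℝ) := by
  induction m, hm using Nat.le_induction with
  | base =>
    simp [dlnPprod, dlnWmat_zero_map_eval_dlnTestPoint_mulVec]
  | succ m hm ih =>
    obtain ⟨l, rfl⟩ := Nat.exists_eq_add_of_le' hm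
    rw [dlnPprod, Matrix.map_mul, ← mulVec_mulVec, ih, dlnWmat_succ_map_eval_dlnTestPoint,
      Finset.prod_Ico_succ_top hm]
    ext k
    simp only [mulVec, dotProduct, of_apply, one_mul, Finset.sum_const, Finset.card_univ,
      Fintype.card_fin, nsmul_eq_mul]
    ring

theorem eval_sum_mul_C_eq_map_eval_mulVec {R σ m n : Type*} [CommSemiring R] [Fintype n]
    (P : Matrix m n (MvPolynomial σ R)) (x : n → R) (v : σ → R) (i : m) :
    eval v (∑ j, P i j * C (x j)) = (P.map (eval v) *ᵥ x) i := by
  simp [mulVec, dotProduct]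

/-- for every nonzero `x ∈ ℝ^N` and every row index `i`, the polynomial
`Σ_j P_{ij} x_j` is not the zero polynomial. -/
theorem dln_product_applied_to_nonzero_vector_ne_zero
    (M : ℕ) (hM : 1 ≤ M) (H : ℕ → ℕ) (hH : ∀ l ≤ M, 1 ≤ H l)
    (x : Fin (H 0) → ℝ) (hx : x ≠ 0) (i : Fin (H M)) :
    (∑ j : Fin (H 0), dlnPprod H M i j * MvPolynomial.C (x j)) ≠ 0 := by
  obtain ⟨j₀, hj₀⟩ := Function.ne_iff.mp hx
  have hwidths : ∏ l ∈ Finset.Ico 1 M, (H l : ℝ) ≠ 0 :=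
    Finset.prod_ne_zero_iff.mpr fun l hl =>
      Nat.cast_ne_zero.mpr (Nat.one_le_iff_ne_zero.mp (hH l (Finset.mem_Ico.mp hl).2.le))
  intro hzero
  have hvalue := congrArg (eval (dlnTestPoint H j₀)) hzero
  rw [eval_sum_mul_C_eq_map_eval_mulVec, dlnPprod_map_eval_dlnTestPoint_mulVec j₀ x hM,
    map_zero] at hvalue
  exact mul_ne_zero hj₀ hwidths hvalue
end

section
/- Let p : ℝ^d → ℝ be (the evaluation of) a multivariate polynomial, and suppose there exist constants a, b ≥ 0 such that ‖∇p(w)‖ ≤ a + b‖w‖ for all w ∈ ℝ^d. Then p has total degree at most 2. -/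
open MvPolynomial

/-- The gradient of (the evaluation of) a multivariate polynomial `p` on `ℝ^d`:
the vector of partial derivatives `∂p/∂w_i` evaluated at `w`. -/
noncomputable def polyGradient {d : ℕ} (p : MvPolynomial (Fin d) ℝ)
    (w : EuclideanSpace ℝ (Fin d)) : EuclideanSpace ℝ (Fin d) :=
  WithLp.toLp 2 (fun i => MvPolynomial.eval (fun j => w j) (MvPolynomial.pderiv i p))

/-!
Each partial derivative `∂p/∂w_i` is bounded by `‖∇p‖`, so it grows at most linearly. A polynomial
`q` of linear growth has total degree at most one: for `v` on which the top homogeneous component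
of `q` does not vanish, `t ↦ q (t • v)` is a one-variable polynomial of the same degree, bounded by
`A + B t` on `[0, ∞)`. Finally, if every partial derivative of `p` has total degree `≤ k`, then `p`
has total degree `≤ k + 1`: differentiating a top-degree monomial in one of its variables lowers
its degree by one and, in characteristic zero, does not kill it.
-/

open Filter Asymptotics
open scoped Polynomial

theorem Polynomial.natDegree_le_of_abs_eval_le {r : ℝ[X]} {A B : ℝ} {k : ℕ}
    (h : ∀ t, 0 ≤ t → |r.eval t| ≤ A + B * t ^ k) : r.natDegree ≤ k := by
  have hbound : (fun t => r.eval t) =O[atTop] fun t => (C A + C B * X ^ k).eval t :=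
    IsBigO.of_bound 1 <| (eventually_ge_atTop 0).mono fun t ht => by
      simpa using (h t ht).trans (le_abs_self _)
  have hlt : (C A + C B * X ^ k).degree < (X ^ (k + 1) : ℝ[X]).degree := by
    rw [degree_X_pow]
    exact (degree_add_le _ _).trans_lt <| max_lt
      (degree_C_le.trans_lt (by exact_mod_cast k.succ_pos))
      ((degree_C_mul_X_pow_le _ _).trans_lt (by exact_mod_cast k.lt_succ_self))
  have hdeg := (div_tendsto_atTop_zero_iff_degree_lt r _ (pow_ne_zero _ X_ne_zero)).mp
    (hbound.trans_isLittleO (isLittleO_atTop_of_degree_lt _ _ hlt)).tendsto_div_nhds_zero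
  rw [degree_X_pow] at hdeg
  exact natDegree_le_iff_degree_le.mpr (Order.le_of_lt_succ hdeg)

namespace MvPolynomial

variable {R σ : Type*}

section CommSemiring

variable [CommSemiring R]

theorem totalDegree_le_succ_of_forall_totalDegree_pderiv_le [NoZeroDivisors R] [CharZero R]
    {p : MvPolynomial σ R} {k : ℕ} (h : ∀ i, (pderiv i p).totalDegree ≤ k) :
    p.totalDegree ≤ k + 1 := by
  refine Finset.sup_le fun m hm => ?_
  obtain rfl | hm0 := eq_or_ne m 0
  · simp
  obtain ⟨i, hi⟩ := Finsupp.support_nonempty_iff.mpr hm0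
  obtain ⟨m', rfl⟩ : ∃ m', m = m' + Finsupp.single i 1 :=
    ⟨m - Finsupp.single i 1, (tsub_add_cancel_of_le (Finsupp.single_le_iff.mpr
      (Nat.one_le_iff_ne_zero.mpr (Finsupp.mem_support_iff.mp hi)))).symm⟩
  have hm' : m' ∈ (pderiv i p).support := by
    rw [mem_support_iff, coeff_pderiv]
    exact mul_ne_zero (mem_support_iff.mp hm) (by exact_mod_cast (m' i).succ_ne_zero)
  have hdeg := (le_totalDegree hm').trans (h i)
  rw [Finsupp.sum_add_index' (fun _ => rfl) (fun _ _ _ => rfl), Finsupp.sum_single_index rfl]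
  omega

noncomputable def restrictLine (v : σ → R) : MvPolynomial σ R →ₐ[R] R[X] :=
  aeval fun i => Polynomial.C (v i) * Polynomial.X

theorem eval_restrictLine (v : σ → R) (p : MvPolynomial σ R) (t : R) :
    (restrictLine v p).eval t = eval (t • v) p := by
  have hline : (fun i => Polynomial.aeval t (Polynomial.C (v i) * Polynomial.X)) = t • v := by
    ext i
    rw [map_mul, Polynomial.aeval_C, Polynomial.aeval_X]
    exact mul_comm _ _
  rw [← Polynomial.coe_aeval_eq_eval, restrictLine, ← AlgHom.comp_apply, comp_aeval, hline,
    aeval_eq_eval]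

theorem restrictLine_monomial (v : σ → R) (m : σ →₀ ℕ) (a : R) :
    restrictLine v (monomial m a) =
      Polynomial.C (a * m.prod fun i k => v i ^ k) * Polynomial.X ^ m.degree := by
  simp only [restrictLine, aeval_monomial, mul_pow, ← Polynomial.C_pow, Finsupp.prod_mul,
    Polynomial.algebraMap_eq, map_mul, mul_assoc, map_finsuppProd]
  congr 2
  exact Finset.prod_pow_eq_pow_sum _ _ _

theorem coeff_restrictLine (v : σ → R) (p : MvPolynomial σ R) (n : ℕ) :
    (restrictLine v p).coeff n = eval v (homogeneousComponent n p) := by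
  classical
  conv_lhs => rw [p.as_sum, map_sum]
  simp only [restrictLine_monomial, Polynomial.finsetSum_coeff, Polynomial.coeff_C_mul_X_pow,
    homogeneousComponent_apply, map_sum, Finset.sum_filter, apply_ite (eval v), map_zero,
    eval_monomial, eq_comm]

theorem homogeneousComponent_totalDegree_ne_zero {p : MvPolynomial σ R} (hp : p ≠ 0) :
    homogeneousComponent p.totalDegree p ≠ 0 := by
  obtain ⟨m, hm, hdeg⟩ := Finset.exists_mem_eq_sup p.support (support_nonempty.mpr hp)
    fun m => m.sum fun _ e => e
  refine ne_zero_iff.mpr ⟨m, ?_⟩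
  rw [coeff_homogeneousComponent, if_pos (by rw [totalDegree, hdeg]; rfl)]
  exact mem_support_iff.mp hm

end CommSemiring

theorem exists_totalDegree_le_natDegree_restrictLine [CommRing R] [IsDomain R] [Infinite R]
    (p : MvPolynomial σ R) : ∃ v, p.totalDegree ≤ (restrictLine v p).natDegree := by
  obtain rfl | hp := eq_or_ne p 0
  · simp
  obtain ⟨v, hv⟩ : ∃ v, eval v (homogeneousComponent p.totalDegree p) ≠ 0 := by
    by_contra! h
    exact homogeneousComponent_totalDegree_ne_zero hp (funext fun v => by simp [h v])
  exact ⟨v, Polynomial.le_natDegree_of_ne_zero (by rwa [coeff_restrictLine])⟩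

theorem totalDegree_le_of_forall_abs_eval_smul_le {p : MvPolynomial σ ℝ} {k : ℕ}
    (h : ∀ v : σ → ℝ, ∃ A B : ℝ, ∀ t, 0 ≤ t → |eval (t • v) p| ≤ A + B * t ^ k) :
    p.totalDegree ≤ k := by
  obtain ⟨v, hv⟩ := exists_totalDegree_le_natDegree_restrictLine p
  obtain ⟨A, B, hAB⟩ := h v
  exact hv.trans <| Polynomial.natDegree_le_of_abs_eval_le fun t ht => by
    simpa only [eval_restrictLine] using hAB t ht

end MvPolynomial

theorem polynomial_totalDegree_le_two_of_gradient_linear_growth_general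
    (d : ℕ) (p : MvPolynomial (Fin d) ℝ) (a b : ℝ)
    (h : ∀ w : EuclideanSpace ℝ (Fin d), ‖polyGradient p w‖ ≤ a + b * ‖w‖) :
    p.totalDegree ≤ 2 := by
  refine totalDegree_le_succ_of_forall_totalDegree_pderiv_le fun i =>
    totalDegree_le_of_forall_abs_eval_smul_le fun v =>
      ⟨a, b * ‖WithLp.toLp 2 v‖, fun t ht => ?_⟩
  calc |eval (t • v) (pderiv i p)| = ‖polyGradient p (WithLp.toLp 2 (t • v)) i‖ := rfl
    _ ≤ ‖polyGradient p (WithLp.toLp 2 (t • v))‖ := PiLp.norm_apply_le _ _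
    _ ≤ a + b * ‖WithLp.toLp 2 (t • v)‖ := h _
    _ = a + b * ‖WithLp.toLp 2 v‖ * t ^ 1 := by
      rw [WithLp.toLp_smul, norm_smul, Real.norm_of_nonneg ht]
      ring

/-- if the gradient of a multivariate polynomial grows at most linearly,
i.e. `‖∇p(w)‖ ≤ a + b‖w‖` for all `w` with constants `a, b ≥ 0`, then `p` has total
degree at most `2`. -/
theorem polynomial_totalDegree_le_two_of_gradient_linear_growth
    (d : ℕ) (p : MvPolynomial (Fin d) ℝ) (a b : ℝ) (ha : 0 ≤ a) (hb : 0 ≤ b)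
    (h : ∀ w : EuclideanSpace ℝ (Fin d), ‖polyGradient p w‖ ≤ a + b * ‖w‖) :
    p.totalDegree ≤ 2 :=
  polynomial_totalDegree_le_two_of_gradient_linear_growth_general d p a b h
end

section
/- Let p : ℝ^d → ℝ be (the evaluation of) a multivariate polynomial whose gradient is globally Lipschitz, i.e. there exists α > 0 with ‖∇p(w₁) − ∇p(w₂)‖ ≤ α‖w₁ − w₂‖ for all w₁, w₂ ∈ ℝ^d. Then p has total degree at most 2. -/
/-!
Restrict `p` to a line `t ↦ t • v`. The derivative of the restriction is `t ↦ ⟪v, ∇p (t • v)⟫`,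
which the Lipschitz bound makes grow at most linearly in `t`; a real polynomial of linear growth
has degree at most one, so the restriction has degree at most two. The coefficient of `tⁿ` in the
restriction is the degree-`n` homogeneous component of `p` evaluated at `v`, so every component of
degree at least three vanishes on all of `ℝ^d` and is therefore zero.
-/

open MvPolynomial

open scoped Polynomial

namespace MvPolynomial

variable {R σ : Type*}

noncomputable def restrictToLine [CommSemiring R] (v : σ → R) : MvPolynomial σ R →ₐ[R] R[X] :=
  aeval fun j => Polynomial.C (v j) * Polynomial.X

section CommSemiring

variable [CommSemiring R]

theorem eval_restrictToLine (v : σ → R) (q : MvPolynomial σ R) (t : R) :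
    (restrictToLine v q).eval t = eval (t • v) q := by
  rw [restrictToLine, ← Polynomial.coe_aeval_eq_eval, ← AlgHom.comp_apply, comp_aeval]
  have hpoint : (fun j => Polynomial.aeval t (Polynomial.C (v j) * Polynomial.X)) = t • v := by
    funext j
    simp only [map_mul, Polynomial.aeval_C, Polynomial.aeval_X, Algebra.algebraMap_self,
      RingHom.id_apply, Pi.smul_apply, smul_eq_mul, mul_comm]
  rw [hpoint]
  rfl

theorem coeff_restrictToLine (v : σ → R) (q : MvPolynomial σ R) (n : ℕ) :
    (restrictToLine v q).coeff n = eval v (homogeneousComponent n q) := by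
  induction q using induction_on' with
  | add p q hp hq => simp [hp, hq]
  | monomial m c =>
    rw [homogeneousComponent_of_mem (isHomogeneous_monomial c rfl)]
    simp only [restrictToLine, aeval_monomial, Finsupp.prod, mul_pow, Finset.prod_mul_distrib,
      Finset.prod_pow_eq_pow_sum, ← map_pow, ← map_prod, Polynomial.algebraMap_eq, ← mul_assoc,
      ← map_mul, Polynomial.coeff_C_mul_X_pow, show ∑ i ∈ m.support, m i = m.degree from rfl]
    split_ifs <;> simp [eval_monomial, Finsupp.prod]

theorem derivative_aeval [Fintype σ] (g : σ → R[X]) (q : MvPolynomial σ R) :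
    (aeval g q).derivative = ∑ j, (g j).derivative * aeval g (pderiv j q) := by
  classical
  induction q using induction_on with
  | C a => simp
  | add p q hp hq => simp [hp, hq, mul_add, Finset.sum_add_distrib]
  | mul_X p i hp =>
    simp only [map_mul, aeval_X, Polynomial.derivative_mul, hp, Finset.sum_mul, Derivation.leibniz,
      pderiv_X, Pi.single_apply, apply_ite, smul_eq_mul, mul_one, mul_zero, map_add, map_zero,
      mul_add, Finset.sum_add_distrib, Finset.sum_ite_eq, Finset.mem_univ, ↓reduceIte]
    rw [add_comm]
    congr 1
    · ring
    · exact Finset.sum_congr rfl fun _ _ => by ring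

theorem derivative_restrictToLine [Fintype σ] (v : σ → R) (q : MvPolynomial σ R) :
    (restrictToLine v q).derivative = ∑ j, Polynomial.C (v j) * restrictToLine v (pderiv j q) := by
  simp [restrictToLine, derivative_aeval]

end CommSemiring

theorem totalDegree_le_of_forall_natDegree_restrictToLine_le [CommRing R] [IsDomain R]
    [Infinite R] {q : MvPolynomial σ R} {k : ℕ}
    (h : ∀ v, (restrictToLine v q).natDegree ≤ k) : q.totalDegree ≤ k := by
  have hcomp : ∀ n, k < n → homogeneousComponent n q = 0 := fun n hn =>
    (homogeneousComponent_isHomogeneous n q).eq_zero_of_forall_eval_eq_zero fun v => by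
      rw [← coeff_restrictToLine]
      exact Polynomial.coeff_eq_zero_of_natDegree_lt ((h v).trans_lt hn)
  refine Finset.sup_le fun m hm => ?_
  by_contra! hlt
  refine mem_support_iff.mp hm ?_
  simpa [coeff_homogeneousComponent] using congrArg (coeff m) (hcomp m.degree hlt)

end MvPolynomial

open Polynomial in
theorem Polynomial.natDegree_le_one_of_abs_eval_le {f : ℝ[X]} {C B : ℝ}
    (h : ∀ t, |f.eval t| ≤ C + B * |t|) : f.natDegree ≤ 1 := by
  have hO : f.eval =O[Filter.atTop] (X : ℝ[X]).eval := by
    refine Asymptotics.IsBigO.of_bound (|C| + |B|) ?_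
    filter_upwards [Filter.eventually_ge_atTop 1] with t ht
    have ht0 : (0 : ℝ) ≤ t := by linarith
    have hft := h t
    rw [abs_of_nonneg ht0] at hft
    rw [Real.norm_eq_abs, Real.norm_eq_abs, eval_X, abs_of_nonneg ht0]
    nlinarith [le_abs_self C, le_abs_self B, abs_nonneg C]
  have ho := hO.trans_isLittleO (isLittleO_atTop_of_degree_lt (P := X) (Q := X ^ 2) (by simp))
  have hdeg := (div_tendsto_atTop_zero_iff_degree_lt _ _ (pow_ne_zero 2 X_ne_zero)).mp
    ho.tendsto_div_nhds_zero
  rw [degree_X_pow] at hdeg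
  exact natDegree_le_of_degree_le (Order.le_of_lt_succ hdeg)

theorem eval_derivative_restrictToLine_eq_inner_polyGradient {d : ℕ}
    (p : MvPolynomial (Fin d) ℝ) (v : EuclideanSpace ℝ (Fin d)) (t : ℝ) :
    (restrictToLine v p).derivative.eval t = inner ℝ v (polyGradient p (t • v)) := by
  simp only [derivative_restrictToLine, Polynomial.eval_finsetSum, Polynomial.eval_mul,
    Polynomial.eval_C, eval_restrictToLine, polyGradient, PiLp.inner_apply]
  refine Finset.sum_congr rfl fun j _ => ?_
  rw [RCLike.inner_apply, conj_trivial, mul_comm]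
  rfl

/-- if the gradient of a multivariate polynomial is globally Lipschitz,
i.e. `‖∇p(w₁) − ∇p(w₂)‖ ≤ α‖w₁ − w₂‖` for all `w₁, w₂` and some `α > 0`, then `p`
has total degree at most `2`. -/
theorem polynomial_totalDegree_le_two_of_gradient_lipschitz
    (d : ℕ) (p : MvPolynomial (Fin d) ℝ)
    (h : ∃ α : ℝ, 0 < α ∧ ∀ w₁ w₂ : EuclideanSpace ℝ (Fin d),
      ‖polyGradient p w₁ - polyGradient p w₂‖ ≤ α * ‖w₁ - w₂‖) :
    p.totalDegree ≤ 2 := by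
  obtain ⟨α, -, hlip⟩ := h
  refine totalDegree_le_of_forall_natDegree_restrictToLine_le fun v => ?_
  set V : EuclideanSpace ℝ (Fin d) := WithLp.toLp 2 v
  have hgrowth : ∀ t : ℝ, |(restrictToLine v p).derivative.eval t|
      ≤ ‖V‖ * ‖polyGradient p 0‖ + α * ‖V‖ ^ 2 * |t| := fun t =>
    calc |(restrictToLine v p).derivative.eval t|
        = |inner ℝ V (polyGradient p (t • V))| := by
          rw [← eval_derivative_restrictToLine_eq_inner_polyGradient]
      _ ≤ ‖V‖ * ‖polyGradient p (t • V)‖ := abs_real_inner_le_norm _ _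
      _ ≤ ‖V‖ * (‖polyGradient p 0‖ + α * ‖t • V - 0‖) := by
          gcongr
          exact (norm_le_norm_add_norm_sub' _ _).trans (by gcongr; exact hlip _ _)
      _ = ‖V‖ * ‖polyGradient p 0‖ + α * ‖V‖ ^ 2 * |t| := by
          rw [sub_zero, norm_smul, Real.norm_eq_abs]
          ring
  have hderiv := Polynomial.natDegree_le_one_of_abs_eval_le hgrowth
  rw [Polynomial.natDegree_derivative] at hderiv
  omega
end

section
/- Let L : ℝ^d → ℝ be twice continuously differentiable, let w₀ satisfy ∇L(w₀) = 0, and suppose the Hessian H = D²L(w₀) is positive definite. Then there exists an open neighbourhood W of w₀ such that lim_{ε → 0⁺} ε^{−d/2} · vol{w ∈ W : L(w) ≤ L(w₀) + ε} = 2^{d/2} (det H)^{−1/2} ω_d, where vol denotes d-dimensional Lebesgue measure and ω_d is the Lebesgue volume of the Euclidean unit ball in ℝ^d. -/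
/-!
Write `Q v = v ⬝ᵥ H v` for the Hessian quadratic form. Second-order Taylor expansion at the
critical point gives `L (w₀ + v) - L w₀ = Q v / 2 + o(‖v‖²)`, and since `Q` is coercive the error
is at most `t/2 · Q v` near `w₀`, for any `t > 0`. Hence, on a fixed small ball and for all small
`ε`, the sublevel set `{L ≤ L w₀ + ε}` lies between the ellipsoids `{Q ≤ 2ε/(1+t)}` and
`{Q ≤ 2ε/(1-t)}`. Writing `H = Bᵀ B`, the ellipsoid `{Q ≤ s}` is the preimage of the ball of radius
`√s` under `B`, so its volume is `s^{d/2} (det H)^{-1/2} ω_d`; letting `t → 0` gives the limit.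
-/

open MeasureTheory Filter Metric Matrix Topology Set
open scoped MatrixOrder

theorem tendsto_of_eventually_mem_Icc {α β γ : Type*} [TopologicalSpace γ] [LinearOrder γ]
    [OrderTopology γ] {l : Filter α} {l' : Filter β} [l'.NeBot] {lo hi : β → γ} {g : α → γ}
    {a : γ} (hlo : Tendsto lo l' (𝓝 a)) (hhi : Tendsto hi l' (𝓝 a))
    (h : ∀ᶠ t in l', ∀ᶠ x in l, g x ∈ Icc (lo t) (hi t)) : Tendsto g l (𝓝 a) := by
  refine tendsto_order.mpr ⟨fun b hb => ?_, fun b hb => ?_⟩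
  · obtain ⟨t, hbt, ht⟩ := ((hlo.eventually (lt_mem_nhds hb)).and h).exists
    exact ht.mono fun x hx => hbt.trans_le hx.1
  · obtain ⟨t, hbt, ht⟩ := ((hhi.eventually (gt_mem_nhds hb)).and h).exists
    exact ht.mono fun x hx => hx.2.trans_lt hbt

theorem ContDiff.taylor_isLittleO_two {E F : Type*} [NormedAddCommGroup E]
    [NormedSpace ℝ E] [NormedAddCommGroup F] [NormedSpace ℝ F] {f : E → F}
    (hf : ContDiff ℝ 2 f) (x : E) :
    (fun y => f y - f x - fderiv ℝ f x (y - x)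
        - (1 / 2 : ℝ) • fderiv ℝ (fderiv ℝ f) x (y - x) (y - x))
      =o[𝓝 x] fun y => ‖y - x‖ ^ 2 := by
  set B := fderiv ℝ (fderiv ℝ f) x
  have hsymm : IsSymmSndFDerivAt ℝ f x := hf.contDiffAt.isSymmSndFDerivAt (by simp)
  have hB : HasFDerivAt (fderiv ℝ f) B x :=
    ((hf.fderiv_right (m := 1) le_rfl).differentiable one_ne_zero x).hasFDerivAt
  have hderiv : ∀ y, HasFDerivAt
      (fun y => f y - fderiv ℝ f x (y - x) - (1 / 2 : ℝ) • B (y - x) (y - x))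
      (fderiv ℝ f y - fderiv ℝ f x - B (y - x)) y := by
    intro y
    have hsub : HasFDerivAt (fun y : E => y - x) (ContinuousLinearMap.id ℝ E) y :=
      (hasFDerivAt_id y).sub_const x
    refine (((hf.differentiable two_ne_zero y).hasFDerivAt.sub
      ((fderiv ℝ f x).hasFDerivAt.comp y hsub)).sub
        ((B.hasFDerivAt_of_bilinear hsub hsub).const_smul (1 / 2 : ℝ))).congr_fderiv ?_
    ext v
    simp only [ContinuousLinearMap.comp_id, one_div, ContinuousLinearMap.precompR_apply, map_sub,
      _root_.sub_apply, ContinuousLinearMap.compL_apply, smul_add, _root_.add_apply,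
      _root_.smul_apply, ContinuousLinearMap.precompL_apply, ContinuousLinearMap.id_apply,
      sub_right_inj]
    rw [hsymm v y, hsymm v x]
    module
  have hderiv_isLittleO :
      (fun y => fderiv ℝ f y - fderiv ℝ f x - B (y - x)) =o[𝓝[univ] x] fun y => ‖y - x‖ ^ 1 := by
    simpa using hB.isLittleO.norm_right
  have := convex_univ.isLittleO_pow_succ (mem_univ x)
    (fun y _ => (hderiv y).hasFDerivWithinAt) hderiv_isLittleO
  rw [nhdsWithin_univ] at this
  refine this.congr_left fun y => ?_
  simp only [sub_self, map_zero, smul_zero, sub_zero]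
  abel

section Sandwich

variable {E : Type*} [SeminormedAddCommGroup E] {Q f : E → ℝ} {c : ℝ}

theorem exists_ball_abs_sub_half_le_mul (hc : 0 < c) (hQ : ∀ v, c * ‖v‖ ^ 2 ≤ Q v)
    (hf : (fun v => f v - Q v / 2) =o[𝓝 0] fun v => ‖v‖ ^ 2) {δ : ℝ} (hδ : 0 < δ) :
    ∃ r > 0, ∀ v ∈ ball 0 r, |f v - Q v / 2| ≤ δ * Q v := by
  obtain ⟨r, hr, hball⟩ := Metric.eventually_nhds_iff.mp (hf.def (mul_pos hδ hc))
  refine ⟨r, hr, fun v hv => (hball hv).trans ?_⟩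
  rw [Real.norm_of_nonneg (by positivity), mul_assoc]
  exact mul_le_mul_of_nonneg_left (hQ v) hδ.le

theorem exists_ball_sublevel_sandwich (hc : 0 < c) (hQ : ∀ v, c * ‖v‖ ^ 2 ≤ Q v)
    (hf : (fun v => f v - Q v / 2) =o[𝓝 0] fun v => ‖v‖ ^ 2) :
    ∃ r > 0, ∀ t ∈ Ioo (0 : ℝ) 1, ∀ᶠ ε in 𝓝[>] 0,
      {v | Q v ≤ 2 / (1 + t) * ε} ⊆ {v ∈ ball 0 r | f v ≤ ε} ∧
      {v ∈ ball 0 r | f v ≤ ε} ⊆ {v | Q v ≤ 2 / (1 - t) * ε} := by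
  obtain ⟨r, hr, hr_quarter⟩ :=
    exists_ball_abs_sub_half_le_mul hc hQ hf (δ := 1 / 4) (by norm_num)
  refine ⟨r, hr, fun t ⟨ht0, ht1⟩ => ?_⟩
  obtain ⟨r', hr', hr'_t⟩ := exists_ball_abs_sub_half_le_mul hc hQ hf (half_pos ht0)
  set ρ := min r r'
  have hρ : 0 < ρ := lt_min hr hr'
  have hsmall : ∀ v : E, c * ‖v‖ ^ 2 < c * ρ ^ 2 → v ∈ ball 0 r ∩ ball 0 r' := by
    intro v hv
    have hvρ : ‖v‖ < ρ := lt_of_pow_lt_pow_left₀ 2 hρ.le (lt_of_mul_lt_mul_left hv hc.le)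
    simp only [mem_inter_iff, mem_ball_zero_iff]
    exact ⟨hvρ.trans_le (min_le_left _ _), hvρ.trans_le (min_le_right _ _)⟩
  filter_upwards [Ioo_mem_nhdsGT (show 0 < c * ρ ^ 2 / 4 by positivity)] with ε ⟨hε0, hε⟩
  constructor
  · intro v hv
    have hQv : (1 + t) * Q v ≤ 2 * ε := by
      rwa [mem_ofPred_eq, div_mul_eq_mul_div, le_div_iff₀ (by linarith), mul_comm] at hv
    have hQ0 : 0 ≤ c * ‖v‖ ^ 2 := by positivity
    obtain ⟨hvr, hvr'⟩ := hsmall v (by nlinarith [hQ v])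
    exact ⟨hvr, by linarith [(abs_le.mp (hr'_t v hvr')).2]⟩
  · rintro v ⟨hvr, hfv⟩
    have hquarter := (abs_le.mp (hr_quarter v hvr)).1
    obtain ⟨-, hvr'⟩ := hsmall v (by nlinarith [hQ v])
    have ht_lower := (abs_le.mp (hr'_t v hvr')).1
    show Q v ≤ 2 / (1 - t) * ε
    rw [div_mul_eq_mul_div, le_div_iff₀ (by linarith)]
    nlinarith

end Sandwich

section Ellipsoid

variable {ι : Type*} [Fintype ι] [DecidableEq ι]

theorem ContinuousLinearMap.apply_apply_eq_dotProduct_mulVec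
    (B : EuclideanSpace ℝ ι →L[ℝ] EuclideanSpace ℝ ι →L[ℝ] ℝ) (v w : EuclideanSpace ℝ ι) :
    B v w = v ⬝ᵥ
      (of fun i j => B (EuclideanSpace.single i 1) (EuclideanSpace.single j 1)) *ᵥ w := by
  conv_lhs => rw [← (EuclideanSpace.basisFun ι ℝ).toBasis.sum_repr v,
    ← (EuclideanSpace.basisFun ι ℝ).toBasis.sum_repr w]
  simp only [OrthonormalBasis.coe_toBasis_repr_apply, EuclideanSpace.basisFun_repr,
    OrthonormalBasis.coe_toBasis, EuclideanSpace.basisFun_apply, map_sum, map_smul,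
    _root_.sum_apply, _root_.smul_apply, smul_eq_mul, Finset.mul_sum, mul_left_comm, dotProduct,
    mulVec, of_apply, mul_comm]
  exact Finset.sum_comm

theorem ContinuousLinearMap.posDef_of_symm_of_pos
    (B : EuclideanSpace ℝ ι →L[ℝ] EuclideanSpace ℝ ι →L[ℝ] ℝ)
    (hsymm : ∀ v w, B v w = B w v) (hpos : ∀ v, v ≠ 0 → 0 < B v v) :
    (of fun i j => B (EuclideanSpace.single i 1) (EuclideanSpace.single j 1)).PosDef := by
  refine .of_dotProduct_mulVec_pos ?_ fun x hx => ?_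
  · ext i j
    exact hsymm _ _
  · simpa [← B.apply_apply_eq_dotProduct_mulVec] using
      hpos (WithLp.toLp 2 x) (by simpa using hx)

theorem Matrix.PosSemidef.exists_dotProduct_mulVec_eq_norm_sq {M : Matrix ι ι ℝ}
    (hM : M.PosSemidef) :
    ∃ B : Matrix ι ι ℝ, |B.det| = √M.det ∧
      ∀ v : EuclideanSpace ℝ ι, v ⬝ᵥ M *ᵥ v = ‖toEuclideanLin B v‖ ^ 2 := by
  obtain ⟨B, rfl⟩ := CStarAlgebra.nonneg_iff_eq_star_mul_self.mp hM.nonneg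
  refine ⟨B, by simp [← sq, star_eq_conjTranspose, Real.sqrt_sq_eq_abs], fun v => ?_⟩
  rw [← real_inner_self_eq_norm_sq, EuclideanSpace.inner_eq_star_dotProduct]
  simp [star_eq_conjTranspose, ← mulVec_mulVec, dotProduct_mulVec, vecMul_transpose,
    dotProduct_comm]

variable {M : Matrix ι ι ℝ}

theorem Matrix.PosDef.exists_pos_mul_norm_sq_le (hM : M.PosDef) :
    ∃ c > 0, ∀ v : EuclideanSpace ℝ ι, c * ‖v‖ ^ 2 ≤ v ⬝ᵥ M *ᵥ v := by
  obtain ⟨B, hdet, hB⟩ := hM.posSemidef.exists_dotProduct_mulVec_eq_norm_sq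
  have hunit : IsUnit (toEuclideanLin B) := by
    rw [LinearMap.isUnit_iff_isUnit_det, LinearMap.det_toLpLin, isUnit_iff_ne_zero]
    exact abs_pos.mp (hdet ▸ Real.sqrt_pos.mpr hM.det_pos)
  obtain ⟨K, hK, hanti⟩ :=
    (toEuclideanLin B).exists_antilipschitzWith ((LinearMap.isUnit_iff_ker_eq_bot _).mp hunit)
  refine ⟨(K : ℝ)⁻¹ ^ 2, by positivity, fun v => ?_⟩
  rw [hB, ← mul_pow]
  gcongr
  rw [inv_mul_le_iff₀ (by positivity)]
  simpa using hanti.le_mul_dist v 0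

theorem Matrix.PosDef.volume_setOf_dotProduct_mulVec_le (hM : M.PosDef) {s : ℝ} (hs : 0 ≤ s) :
    volume {v : EuclideanSpace ℝ ι | v ⬝ᵥ M *ᵥ v ≤ s} =
      ENNReal.ofReal (s ^ (Fintype.card ι / 2 : ℝ) * M.det ^ (-1 / 2 : ℝ))
        * volume (ball (0 : EuclideanSpace ℝ ι) 1) := by
  obtain ⟨B, hdet, hB⟩ := hM.posSemidef.exists_dotProduct_mulVec_eq_norm_sq
  have hBdet : B.det ≠ 0 := abs_pos.mp (hdet ▸ Real.sqrt_pos.mpr hM.det_pos)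
  have hset : {v : EuclideanSpace ℝ ι | v ⬝ᵥ M *ᵥ v ≤ s} =
      toEuclideanLin B ⁻¹' closedBall 0 (√s) := by
    ext v
    simp [hB, Real.le_sqrt (norm_nonneg _) hs]
  rw [hset, Measure.addHaar_preimage_linearMap _ (by rwa [LinearMap.det_toLpLin]),
    Measure.addHaar_closedBall _ _ (Real.sqrt_nonneg s), LinearMap.det_toLpLin,
    finrank_euclideanSpace, ← mul_assoc, ← ENNReal.ofReal_mul (abs_nonneg _), abs_inv, hdet,
    Real.sqrt_eq_rpow, Real.sqrt_eq_rpow, ← Real.rpow_natCast, ← Real.rpow_mul hs,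
    ← Real.rpow_neg hM.det_pos.le, mul_comm]
  ring_nf

theorem Matrix.PosDef.volume_real_setOf_dotProduct_mulVec_le (hM : M.PosDef) {s : ℝ}
    (hs : 0 ≤ s) :
    volume.real {v : EuclideanSpace ℝ ι | v ⬝ᵥ M *ᵥ v ≤ s} =
      s ^ (Fintype.card ι / 2 : ℝ) *
        (M.det ^ (-1 / 2 : ℝ) * volume.real (ball (0 : EuclideanSpace ℝ ι) 1)) := by
  rw [measureReal_def, hM.volume_setOf_dotProduct_mulVec_le hs, ENNReal.toReal_mul,
    ENNReal.toReal_ofReal (by have := hM.det_pos; positivity), mul_assoc, measureReal_def]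

theorem Matrix.PosDef.tendsto_rpow_mul_volume_real_sublevel (hM : M.PosDef)
    {f : EuclideanSpace ℝ ι → ℝ}
    (hf : (fun v => f v - v ⬝ᵥ M *ᵥ v / 2) =o[𝓝 0] fun v => ‖v‖ ^ 2) :
    ∃ r > 0, Tendsto
      (fun ε => ε ^ (-(Fintype.card ι : ℝ) / 2) * volume.real {v ∈ ball 0 r | f v ≤ ε})
      (𝓝[>] 0)
      (𝓝 (2 ^ ((Fintype.card ι : ℝ) / 2) * M.det ^ (-1 / 2 : ℝ)
        * volume.real (ball (0 : EuclideanSpace ℝ ι) 1))) := by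
  obtain ⟨c, hc, hQ⟩ := hM.exists_pos_mul_norm_sq_le
  obtain ⟨r, hr, hsandwich⟩ := exists_ball_sublevel_sandwich hc hQ hf
  set d : ℝ := (Fintype.card ι : ℝ)
  set K := M.det ^ (-1 / 2 : ℝ) * volume.real (ball (0 : EuclideanSpace ℝ ι) 1)
  have hfinite : ∀ s, 0 ≤ s → volume {v : EuclideanSpace ℝ ι | v ⬝ᵥ M *ᵥ v ≤ s} ≠ ⊤ := by
    intro s hs
    rw [hM.volume_setOf_dotProduct_mulVec_le hs]
    exact ENNReal.mul_ne_top ENNReal.ofReal_ne_top measure_ball_lt_top.ne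
  have hscale : ∀ a ε : ℝ, 0 ≤ a → 0 < ε →
      ε ^ (-d / 2) * volume.real {v : EuclideanSpace ℝ ι | v ⬝ᵥ M *ᵥ v ≤ a * ε}
        = a ^ (d / 2) * K := by
    intro a ε ha hε
    rw [hM.volume_real_setOf_dotProduct_mulVec_le (mul_nonneg ha hε.le), mul_comm a ε,
      Real.mul_rpow hε.le ha, mul_assoc, neg_div 2 d, Real.rpow_neg hε.le,
      inv_mul_cancel_left₀ (Real.rpow_pos_of_pos hε _).ne']
  have hlim : ∀ σ : ℝ, Tendsto (fun t : ℝ => (2 / (1 + σ * t)) ^ (d / 2) * K) (𝓝[>] 0)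
      (𝓝 (2 ^ (d / 2) * K)) := by
    intro σ
    have : ContinuousAt (fun t : ℝ => (2 / (1 + σ * t)) ^ (d / 2) * K) 0 := by
      fun_prop (disch := norm_num)
    simpa using this.tendsto.mono_left nhdsWithin_le_nhds
  refine ⟨r, hr, ?_⟩
  rw [mul_assoc]
  refine tendsto_of_eventually_mem_Icc (hlim 1) (hlim (-1)) ?_
  filter_upwards [Ioo_mem_nhdsGT one_pos] with t ht
  filter_upwards [hsandwich t ht, self_mem_nhdsWithin] with ε ⟨hlo, hhi⟩ (hε : 0 < ε)
  have hlo_pos : 0 < 2 / (1 + t) := div_pos two_pos (by linarith [ht.1])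
  have hhi_pos : 0 < 2 / (1 - t) := div_pos two_pos (by linarith [ht.2])
  have hfin := hfinite _ (mul_pos hhi_pos hε).le
  rw [one_mul, neg_one_mul, ← sub_eq_add_neg, ← hscale _ _ hlo_pos.le hε,
    ← hscale _ _ hhi_pos.le hε]
  constructor
  · gcongr
    exact ((measure_mono hhi).trans_lt hfin.lt_top).ne
  · gcongr

end Ellipsoid

/-- at a non-degenerate critical point `w₀` (vanishing derivative,
positive definite Hessian `H`) of a `C²` function `L : ℝ^d → ℝ`, there is an open
neighbourhood `W` of `w₀` on which the sublevel-set volume satisfies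
`ε^{-d/2} · vol{w ∈ W : L w ≤ L w₀ + ε} → 2^{d/2} (det H)^{-1/2} ω_d` as `ε → 0⁺`,
where `ω_d` is the volume of the unit ball in `ℝ^d`. -/
theorem sublevel_volume_scaling_nondegenerate_minimum
    (d : ℕ) (L : EuclideanSpace ℝ (Fin d) → ℝ) (hC2 : ContDiff ℝ 2 L)
    (w0 : EuclideanSpace ℝ (Fin d))
    (hcrit : fderiv ℝ L w0 = 0)
    (hposdef : ∀ v : EuclideanSpace ℝ (Fin d), v ≠ 0 →
      0 < iteratedFDeriv ℝ 2 L w0 ![v, v]) :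
    ∃ W : Set (EuclideanSpace ℝ (Fin d)), IsOpen W ∧ w0 ∈ W ∧
      Tendsto (fun ε : ℝ =>
          ε ^ (-(d : ℝ) / 2) * (volume {w ∈ W | L w ≤ L w0 + ε}).toReal)
        (nhdsWithin 0 (Set.Ioi 0))
        (nhds ((2 : ℝ) ^ ((d : ℝ) / 2)
          * ((Matrix.of fun i j : Fin d => iteratedFDeriv ℝ 2 L w0
              ![EuclideanSpace.single i 1, EuclideanSpace.single j 1]).det) ^ (-(1 : ℝ) / 2)
          * (volume (Metric.ball (0 : EuclideanSpace ℝ (Fin d)) 1)).toReal)) := by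
  set H := fderiv ℝ (fderiv ℝ L) w0
  have hH : ∀ v w, iteratedFDeriv ℝ 2 L w0 ![v, w] = H v w := fun v w => by
    simp [iteratedFDeriv_two_apply, H]
  simp only [hH]
  have hHpos := H.posDef_of_symm_of_pos (hC2.contDiffAt.isSymmSndFDerivAt (by simp))
    fun v hv => hH v v ▸ hposdef v hv
  have htaylor : (fun v => L (w0 + v) - L w0
      - v ⬝ᵥ (of fun i j => H (EuclideanSpace.single i 1) (EuclideanSpace.single j 1)) *ᵥ v / 2)
      =o[𝓝 0] fun v => ‖v‖ ^ 2 := by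
    have := (hC2.taylor_isLittleO_two w0).comp_tendsto
      ((continuous_const_add w0).tendsto' 0 w0 (add_zero w0))
    refine this.congr (fun v => ?_) fun v => ?_ <;>
      simp only [Function.comp_apply, add_sub_cancel_left]
    rw [hcrit, ← H.apply_apply_eq_dotProduct_mulVec, _root_.zero_apply, smul_eq_mul]
    ring
  obtain ⟨r, hr, hlim⟩ := hHpos.tendsto_rpow_mul_volume_real_sublevel htaylor
  refine ⟨ball w0 r, isOpen_ball, mem_ball_self hr, ?_⟩
  have htranslate : ∀ ε, {v ∈ ball 0 r | L (w0 + v) - L w0 ≤ ε} =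
      (w0 + ·) ⁻¹' {w ∈ ball w0 r | L w ≤ L w0 + ε} := fun ε => by
    ext v
    simp only [mem_ofPred_eq, mem_preimage, mem_ball, dist_zero_right, dist_self_add_left,
      sub_le_iff_le_add']
  simp only [Fintype.card_fin, htranslate, measureReal_def, measure_preimage_add] at hlim
  exact hlim
end

section
/- Let M ≥ 1 and let Δ_0, Δ_1, …, Δ_M be nonnegative integers. Then there exists a subset Σ ⊆ {0, 1, …, M} with |Σ| ≥ 2 such that, setting ℓ = |Σ| − 1 and Σᶜ = {0, …, M} \ Σ: (1) max{Δ_σ : σ ∈ Σ} < min{Δ_τ : τ ∈ Σᶜ}; (2) Σ_{σ ∈ Σ} Δ_σ ≥ ℓ · max{Δ_σ : σ ∈ Σ}; and (3) Σ_{σ ∈ Σ} Δ_σ < ℓ · max{Δ_τ : τ ∈ Σᶜ}; where conditions (1) and (3) are interpreted as vacuously true when Σᶜ is empty. -/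
/-!
Sort the values, `g 0 ≤ g 1 ≤ ⋯ ≤ g M`, and only consider the prefixes `{0, …, k}` of the sorted
order. Condition (2) for the prefix `{0, …, k}` reads `k * g k ≤ g 0 + ⋯ + g k`, and it holds as long
as condition (3) failed for the shorter prefix `{0, …, k - 1}`. So the first `k ≥ 1` for which (3)
holds (or `k = M` if there is none) gives the index set; (1) is then forced, since (2) and (3)
together say `k * g k ≤ g 0 + ⋯ + g k < k * g (k + 1)`.
-/

open Finset Fin.NatCast

theorem Nat.exists_mul_le_sum_range_and_sum_range_lt (g : ℕ → ℕ) {M : ℕ} (hM : 1 ≤ M) :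
    ∃ k, 1 ≤ k ∧ k ≤ M ∧ k * g k ≤ ∑ i ∈ range (k + 1), g i ∧
      (k < M → ∑ i ∈ range (k + 1), g i < k * g (k + 1)) := by
  classical
  have hdone : ∃ k, M ≤ k ∨ ∑ i ∈ range (k + 1), g i < k * g (k + 1) := ⟨M, .inl le_rfl⟩
  set k := Nat.find hdone
  have hk : 1 ≤ k := Nat.find_pos hdone |>.mpr (by simp only [zero_mul, Nat.not_lt_zero, or_false]; omega)
  have hkM : k ≤ M := Nat.find_min' hdone (.inl le_rfl)
  have hprefix : ∀ j ≤ k, j * g j ≤ ∑ i ∈ range (j + 1), g i := by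
    rintro (_ | j) hj
    · simp
    · have hj' : j * g (j + 1) ≤ ∑ i ∈ range (j + 1), g i := by
        have := Nat.find_min hdone (show j < k by omega)
        push Not at this
        exact this.2
      rw [sum_range_succ, add_one_mul]
      omega
  exact ⟨k, hk, hkM, hprefix k le_rfl, fun hlt => (Nat.find_spec hdone).resolve_left (by omega)⟩

section SortedPrefix

variable {α : Type*} [LinearOrder α] {n : ℕ} [NeZero n] (Δ : Fin n → α)

def sortedPrefix (k : ℕ) : Finset (Fin n) :=
  (range (k + 1)).image fun m : ℕ => Tuple.sort Δ m

theorem mem_sortedPrefix {k : ℕ} {s : Fin n} :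
    s ∈ sortedPrefix Δ k ↔ ((Tuple.sort Δ).symm s : ℕ) ≤ k := by
  refine ⟨fun hs => ?_, fun h => mem_image.mpr ⟨_, mem_range.mpr (Nat.lt_succ_of_le h), by simp⟩⟩
  obtain ⟨m, hm, rfl⟩ := mem_image.mp hs
  rw [Equiv.symm_apply_apply, Fin.val_natCast]
  exact (Nat.mod_le m n).trans (Nat.lt_succ_iff.mp (mem_range.mp hm))

theorem sort_natCast_mono {m m' : ℕ} (h : m ≤ m') (hm' : m' < n) :
    Δ (Tuple.sort Δ m) ≤ Δ (Tuple.sort Δ m') :=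
  Tuple.monotone_sort Δ <| by
    rw [Fin.le_def, Fin.val_cast_of_lt (h.trans_lt hm'), Fin.val_cast_of_lt hm']
    exact h

theorem injOn_sort_natCast_range {k : ℕ} (hk : k < n) :
    Set.InjOn (fun m : ℕ => Tuple.sort Δ m) (range (k + 1)) := by
  intro m hm m' hm' h
  simp only [coe_range, Set.mem_Iio] at hm hm'
  simpa [Fin.val_cast_of_lt (show m < n by omega), Fin.val_cast_of_lt (show m' < n by omega)]
    using congrArg Fin.val ((Tuple.sort Δ).injective h)

theorem card_sortedPrefix {k : ℕ} (hk : k < n) : #(sortedPrefix Δ k) = k + 1 := by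
  rw [sortedPrefix, card_image_of_injOn (injOn_sort_natCast_range Δ hk), card_range]

theorem sum_sortedPrefix {M : Type*} [AddCommMonoid M] {k : ℕ} (hk : k < n) (f : Fin n → M) :
    ∑ s ∈ sortedPrefix Δ k, f s = ∑ m ∈ range (k + 1), f (Tuple.sort Δ m) :=
  sum_image (injOn_sort_natCast_range Δ hk)

theorem le_sort_of_mem_sortedPrefix {k : ℕ} (hk : k < n) {s : Fin n}
    (hs : s ∈ sortedPrefix Δ k) : Δ s ≤ Δ (Tuple.sort Δ k) := by
  simpa using sort_natCast_mono Δ ((mem_sortedPrefix Δ).mp hs) hk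

theorem sort_succ_le_of_not_mem_sortedPrefix {k : ℕ} {s : Fin n} (hs : s ∉ sortedPrefix Δ k) :
    Δ (Tuple.sort Δ ↑(k + 1)) ≤ Δ s := by
  rw [mem_sortedPrefix, not_le] at hs
  simpa using sort_natCast_mono Δ hs ((Tuple.sort Δ).symm s).isLt

theorem sort_succ_not_mem_sortedPrefix {k : ℕ} (hk : k + 1 < n) :
    Tuple.sort Δ ↑(k + 1) ∉ sortedPrefix Δ k := by
  rw [mem_sortedPrefix, Equiv.symm_apply_apply, Fin.val_cast_of_lt hk]
  omega

end SortedPrefix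

/-- for any `M ≥ 1` and nonnegative integers `Δ_0, …, Δ_M`, there is a
subset `Σ ⊆ {0, …, M}` with `|Σ| ≥ 2` such that, with `ℓ = |Σ| − 1`:
(1) `max {Δ_σ : σ ∈ Σ} < min {Δ_τ : τ ∈ Σᶜ}`;
(2) `Σ_{σ ∈ Σ} Δ_σ ≥ ℓ · max {Δ_σ : σ ∈ Σ}`;
(3) `Σ_{σ ∈ Σ} Δ_σ < ℓ · max {Δ_τ : τ ∈ Σᶜ}`;
with (1) and (3) vacuously true when `Σᶜ` is empty. -/
theorem dln_llc_index_set_exists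
    (M : ℕ) (hM : 1 ≤ M) (Δ : Fin (M + 1) → ℕ) :
    ∃ S : Finset (Fin (M + 1)), 2 ≤ S.card ∧
      (∀ σ ∈ S, ∀ τ ∈ Sᶜ, Δ σ < Δ τ) ∧
      (∀ σ ∈ S, (S.card - 1) * Δ σ ≤ ∑ s ∈ S, Δ s) ∧
      (Sᶜ.Nonempty → ∃ τ ∈ Sᶜ, (∑ s ∈ S, Δ s) < (S.card - 1) * Δ τ) := by
  obtain ⟨k, hk, hkM, hmul_le, hlt_mul⟩ :=
    Nat.exists_mul_le_sum_range_and_sum_range_lt (fun m => Δ (Tuple.sort Δ m)) hM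
  have hkn : k < M + 1 := by omega
  set S := sortedPrefix Δ k
  have hcard : #S - 1 = k := by rw [card_sortedPrefix Δ hkn, Nat.add_sub_cancel]
  have hsum : ∑ s ∈ S, Δ s = ∑ m ∈ range (k + 1), Δ (Tuple.sort Δ m) := sum_sortedPrefix Δ hkn Δ
  have hkM_of_compl : ∀ τ ∈ Sᶜ, k < M := fun τ hτ => by
    have := (mem_sortedPrefix Δ).not.mp (mem_compl.mp hτ)
    omega
  refine ⟨S, by rw [card_sortedPrefix Δ hkn]; omega, fun s hs τ hτ => ?_, fun s hs => ?_, ?_⟩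
  · calc Δ s ≤ Δ (Tuple.sort Δ k) := le_sort_of_mem_sortedPrefix Δ hkn hs
      _ < Δ (Tuple.sort Δ ↑(k + 1)) :=
        Nat.lt_of_mul_lt_mul_left (hmul_le.trans_lt (hlt_mul (hkM_of_compl τ hτ)))
      _ ≤ Δ τ := sort_succ_le_of_not_mem_sortedPrefix Δ (mem_compl.mp hτ)
  · rw [hcard, hsum]
    exact (Nat.mul_le_mul_left k (le_sort_of_mem_sortedPrefix Δ hkn hs)).trans hmul_le
  · rintro ⟨τ, hτ⟩
    have hkM' := hkM_of_compl τ hτ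
    exact ⟨_, mem_compl.mpr (sort_succ_not_mem_sortedPrefix Δ (by omega)),
      by rw [hcard, hsum]; exact hlt_mul hkM'⟩
end
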